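/- Define theta_n(X,Y) as the n-th moment (weighted Motzkin path sum) for b_k = 2k + X + Y and lambda_k = (k+X)(k-1+Y). Then for every J >= 0: sum_{k=0}^{J} theta_k(X,Y) * (Y-1)_{J-k} (X)_{J-k} / (J-k)! = (Y)_J (X+1)_J / J!. -/
import Mathlib


/-- The field `ℚ(X,Y)` of rational functions in two indeterminates. -/
noncomputable abbrev KF : Type := RatFunc (RatFunc ℚ)

/-- The indeterminate `X`. -/
noncomputable def Xv : KF := RatFunc.C RatFunc.X

/-- The indeterminate `Y`. -/
noncomputable def Yv : KF := RatFunc.X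

/-- The rising factorial (Pochhammer symbol) `(a)_j = a(a+1)⋯(a+j-1)`. -/
def rf {R : Type} [CommRing R] (a : R) (j : ℕ) : R := ∏ i ∈ Finset.range j, (a + i)

/-- `mwalk b lam n h` is the weighted sum over Motzkin paths of length `n` from height `h`
down to height `0`: up steps have weight `1`, level steps at height `k` weight `b k`,
down steps from height `k` weight `lam k`.  The `n`-th moment is `mwalk b lam n 0`. -/
noncomputable def mwalk {R : Type} [CommRing R] (b lam : ℕ → R) : ℕ → ℕ → R
  | 0, h => if h = 0 then 1 else 0
  | n + 1, 0 => mwalk b lam n 1 + b 0 * mwalk b lam n 0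
  | n + 1, h + 1 =>
      mwalk b lam n (h + 2) + b (h + 1) * mwalk b lam n (h + 1) + lam (h + 1) * mwalk b lam n h

/-- The moments `θ_n(X,Y)` of the associated Laguerre polynomials,
for `b_k = 2k + X + Y` and `λ_k = (k+X)(k-1+Y)`. -/
noncomputable def theta (n : ℕ) : KF :=
  mwalk (fun k => 2 * (k : KF) + Xv + Yv) (fun k => ((k : KF) + Xv) * ((k : KF) - 1 + Yv)) n 0

instance : CharZero (RatFunc ℚ) :=
  charZero_of_injective_algebraMap ((algebraMap ℚ (RatFunc ℚ)).injective)
instance : CharZero KF :=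
  charZero_of_injective_algebraMap ((algebraMap (RatFunc ℚ) KF).injective)

lemma rf_zero {R : Type} [CommRing R] (a : R) : rf a 0 = 1 := Finset.prod_range_zero _

lemma rf_succ_left {R : Type} [CommRing R] (a : R) (j : ℕ) :
    rf a (j+1) = a * rf (a+1) j := by
  unfold rf
  rw [Finset.prod_range_succ']
  simp only [Nat.cast_add, Nat.cast_one, Nat.cast_zero, add_zero]
  rw [mul_comm]
  congr 1
  exact Finset.prod_congr rfl fun i _ => by ring

lemma rf_succ_right {R : Type} [CommRing R] (a : R) (j : ℕ) :
    rf a (j+1) = rf a j * (a + j) := Finset.prod_range_succ _ _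

/-- Level weights. -/
noncomputable def bF (k : ℕ) : KF := 2 * (k : KF) + Xv + Yv
/-- Down-step weights. -/
noncomputable def lamF (k : ℕ) : KF := ((k : KF) + Xv) * ((k : KF) - 1 + Yv)
/-- Taylor coefficients of `₂F₀(Y-1+h, X+h; x)`. -/
noncomputable def cF (h j : ℕ) : KF :=
  rf (Yv - 1 + h) j * rf (Xv + h) j / (j.factorial : KF)
/-- Product of the first `h` down-step weights. -/
noncomputable def LamF (h : ℕ) : KF := ∏ i ∈ Finset.range h, lamF (i+1)

lemma cF_zero (h : ℕ) : cF h 0 = 1 := by simp [cF, rf_zero]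

lemma LamF_succ (h : ℕ) : LamF (h+1) = LamF h * lamF (h+1) := Finset.prod_range_succ _ _

lemma mwalk_zero : ∀ h, mwalk bF lamF 0 h = if h = 0 then 1 else 0 := fun h => by rw [mwalk]

lemma fact_ne (j : ℕ) : ((j.factorial : KF)) ≠ 0 :=
  Nat.cast_ne_zero.mpr j.factorial_ne_zero

/-- Core polynomial identity behind the contiguous relation for `₂F₀`. -/
lemma contig_core {R : Type} [CommRing R] (u v : R) (j : ℕ) :
    rf (u+1) (j+2) * rf (v+1) (j+2) = rf u (j+2) * rf v (j+2)
      + (u+v+1) * ((j:R)+2) * (rf (u+1) (j+1) * rf (v+1) (j+1))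
      + (v+1)*(u+1) * (((j:R)+2) * ((j:R)+1)) * (rf (u+2) j * rf (v+2) j) := by
  rw [show u+2 = u+1+1 by ring, show v+2 = v+1+1 by ring]
  rw [rf_succ_left (u+1) (j+1), rf_succ_left (v+1) (j+1),
      rf_succ_left u (j+1), rf_succ_left v (j+1),
      rf_succ_right (u+1+1) j, rf_succ_right (v+1+1) j,
      rf_succ_left (u+1) j, rf_succ_left (v+1) j]
  ring

/-- The contiguous relation `A_{h+1} - b_h x A_{h+1} - λ_{h+1} x² A_{h+2} = A_h`
at the level of coefficients, for coefficient index `≥ 2`. -/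
lemma contig (h j : ℕ) :
    cF (h+1) (j+2) = cF h (j+2) + bF h * cF (h+1) (j+1) + lamF (h+1) * cF (h+2) j := by
  have core := contig_core (Yv - 1 + (h:KF)) (Xv + (h:KF)) j
  have n0 := fact_ne j
  have n1 : ((j:KF)+1) ≠ 0 := by
    have : (((j+1:ℕ)):KF) ≠ 0 := Nat.cast_ne_zero.mpr (by omega)
    push_cast at this; exact this
  have n2 : ((j:KF)+2) ≠ 0 := by
    have : (((j+2:ℕ)):KF) ≠ 0 := Nat.cast_ne_zero.mpr (by omega)
    push_cast at this; exact this
  have E1 : (((j+1).factorial : ℕ):KF) = (j.factorial : KF) * ((j:KF)+1) := by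
    push_cast [Nat.factorial_succ]; ring
  have E2 : (((j+2).factorial : ℕ):KF) = (j.factorial : KF) * ((j:KF)+1) * ((j:KF)+2) := by
    push_cast [Nat.factorial_succ]; ring
  have hD : (j.factorial : KF) * ((j:KF)+1) * ((j:KF)+2) ≠ 0 :=
    mul_ne_zero (mul_ne_zero n0 n1) n2
  have aux1 : ∀ w C : KF,
      w * (C / ((j.factorial:KF) * ((j:KF)+1))) * ((j.factorial:KF) * ((j:KF)+1) * ((j:KF)+2))
        = w * C * ((j:KF)+2) := by
    intro w C
    rw [show w * (C / ((j.factorial:KF) * ((j:KF)+1))) * ((j.factorial:KF) * ((j:KF)+1) * ((j:KF)+2))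
          = w * (C / ((j.factorial:KF) * ((j:KF)+1)) * ((j.factorial:KF) * ((j:KF)+1))) * ((j:KF)+2) from by
            ring,
        div_mul_cancel₀ _ (mul_ne_zero n0 n1)]
  have aux2 : ∀ w C : KF,
      w * (C / (j.factorial:KF)) * ((j.factorial:KF) * ((j:KF)+1) * ((j:KF)+2))
        = w * C * (((j:KF)+1) * ((j:KF)+2)) := by
    intro w C
    rw [show w * (C / (j.factorial:KF)) * ((j.factorial:KF) * ((j:KF)+1) * ((j:KF)+2))
          = w * (C / (j.factorial:KF) * (j.factorial:KF)) * (((j:KF)+1) * ((j:KF)+2)) from by ring,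
        div_mul_cancel₀ _ n0]
  unfold cF bF lamF
  rw [E1, E2]
  apply mul_right_cancel₀ hD
  rw [add_mul, add_mul, div_mul_cancel₀ _ hD, div_mul_cancel₀ _ hD, aux1, aux2]
  push_cast
  rw [show Yv - 1 + ((h:KF) + 1) = Yv - 1 + (h:KF) + 1 from by ring,
      show Yv - 1 + ((h:KF) + 2) = Yv - 1 + (h:KF) + 2 from by ring,
      show Xv + ((h:KF) + 1) = Xv + (h:KF) + 1 from by ring,
      show Xv + ((h:KF) + 2) = Xv + (h:KF) + 2 from by ring]
  linear_combination core

/-- The contiguous relation at coefficient index `1`. -/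
lemma contig1 (h : ℕ) : cF (h+1) 1 = cF h 1 + bF h * cF (h+1) 0 := by
  unfold cF bF
  simp only [rf_zero, Nat.factorial_one, Nat.factorial_zero, Nat.cast_one]
  rw [rf_succ_right (Yv - 1 + ((h+1:ℕ):KF)) 0, rf_succ_right (Xv + ((h+1:ℕ):KF)) 0,
      rf_succ_right (Yv - 1 + (h:KF)) 0, rf_succ_right (Xv + (h:KF)) 0]
  simp only [rf_zero]
  push_cast
  ring

/-- Key convolution identity at every starting height `h`:
`∑_k mwalk(k,h) c₀(J-k) = Λ_h c_{h+1}(J-h)` (and `0` if `h > J`). -/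
lemma key (J : ℕ) : ∀ h : ℕ,
    ∑ k ∈ Finset.range (J+1), mwalk bF lamF k h * cF 0 (J - k)
      = if h ≤ J then LamF h * cF (h+1) (J - h) else 0 := by
  induction J with
  | zero =>
    intro h
    cases h with
    | zero => simp [mwalk, cF_zero, LamF]
    | succ m => simp [mwalk]
  | succ J ih =>
    intro h
    rw [Finset.sum_range_succ']
    simp only [Nat.add_sub_add_right, Nat.sub_zero]
    cases h with
    | zero =>
      have expand : ∀ k, mwalk bF lamF (k+1) 0
          = mwalk bF lamF k 1 + bF 0 * mwalk bF lamF k 0 := fun k => by rw [mwalk]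
      simp only [expand, add_mul, mul_assoc, Finset.sum_add_distrib, ← Finset.mul_sum]
      rw [ih 1, ih 0, mwalk_zero, if_pos rfl, if_pos (Nat.zero_le J),
        if_pos (Nat.zero_le (J+1)), Nat.sub_zero, Nat.sub_zero, one_mul]
      have hL0 : LamF 0 = 1 := Finset.prod_range_zero _
      have hL1 : LamF 1 = lamF 1 := by rw [LamF_succ 0, hL0, one_mul]
      rw [hL0, one_mul, one_mul]
      rcases J with _ | m
      · rw [if_neg (by omega)]
        simp only [zero_add]
        linear_combination -contig1 0
      · rw [if_pos (by omega), hL1, show m + 1 - 1 = m from by omega,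
          show m + 1 + 1 = m + 2 from rfl]
        linear_combination -contig 0 m
    | succ m =>
      have expand : ∀ k, mwalk bF lamF (k+1) (m+1)
          = mwalk bF lamF k (m+2) + bF (m+1) * mwalk bF lamF k (m+1)
            + lamF (m+1) * mwalk bF lamF k m := fun k => by rw [mwalk]
      simp only [expand, add_mul, mul_assoc, Finset.sum_add_distrib, ← Finset.mul_sum]
      rw [ih (m+2), ih (m+1), ih m]
      simp only [mwalk, if_neg (Nat.succ_ne_zero m), zero_mul, add_zero]
      rcases Nat.lt_or_ge J m with hc | hc
      · rw [if_neg (by omega), if_neg (by omega), if_neg (by omega), if_neg (by omega)]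
        ring
      · obtain ⟨j, rfl⟩ : ∃ j, J = m + j := ⟨J - m, by omega⟩
        rcases j with _ | _ | j
        · rw [if_neg (by omega), if_neg (by omega), if_pos (by omega), if_pos (by omega)]
          rw [show m + 0 - m = 0 from by omega, show m + 0 + 1 - (m+1) = 0 from by omega,
            cF_zero, cF_zero, LamF_succ]
          ring
        · rw [if_neg (by omega), if_pos (by omega), if_pos (by omega), if_pos (by omega)]
          rw [show m + 1 - (m+1) = 0 from by omega, show m + 1 - m = 1 from by omega,
            show m + 1 + 1 - (m+1) = 1 from by omega]
          have hL := LamF_succ m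
          linear_combination (-(LamF (m+1))) * contig1 (m+1) - cF (m+1) 1 * hL
        · rw [if_pos (by omega), if_pos (by omega), if_pos (by omega), if_pos (by omega)]
          rw [show m + (j+2) - (m+2) = j from by omega, show m + (j+2) - (m+1) = j+1 from by omega,
            show m + (j+2) - m = j+2 from by omega, show m + (j+2) + 1 - (m+1) = j+2 from by omega]
          have hL1 := LamF_succ m
          have hL2 := LamF_succ (m+1)
          linear_combination (-(LamF (m+1))) * contig (m+1) j + cF (m+2+1) j * hL2
            - cF (m+1) (j+2) * hL1

/-- The convolution recurrence for the associated Laguerre moments: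
`∑_{k=0}^J θ_k (Y-1)_{J-k} (X)_{J-k}/(J-k)! = (Y)_J (X+1)_J / J!`. -/
theorem stmt14 (J : ℕ) :
    ∑ k ∈ Finset.range (J + 1),
      theta k * rf (Yv - 1) (J - k) * rf Xv (J - k) / ((J - k).factorial : KF)
      = rf Yv J * rf (Xv + 1) J / (J.factorial : KF) := by
  have h := key J 0
  have hterm : ∀ k, theta k * rf (Yv - 1) (J - k) * rf Xv (J - k) / ((J - k).factorial : KF)
      = mwalk bF lamF k 0 * cF 0 (J - k) := by
    intro k
    have ht : theta k = mwalk bF lamF k 0 := rfl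
    rw [ht, cF]
    push_cast
    rw [add_zero, add_zero]
    ring
  rw [Finset.sum_congr rfl (fun k _ => hterm k), h, if_pos (Nat.zero_le J), Nat.sub_zero]
  have hL0 : LamF 0 = 1 := Finset.prod_range_zero _
  rw [hL0, one_mul, cF]
  push_cast
  rw [show Yv - 1 + (1 : KF) = Yv from by ring]
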